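/- For the commutative algebra A = ℤ[e_{ij} : 1≤i<j≤n]/(e_{ij}², e_{ij}e_{ik} − e_{ij}e_{jk} + e_{ik}e_{jk}), the monomial m = e_{12}e_{13}⋯e_{1n} is nonzero in A. -/

import Mathlib

/-!
Sending `e_{ij} ↦ x_j` defines a ring map from `A` to `ℤ[x_1, …, x_n]/(x_1², …, x_n²)`: the
squares go to `x_j²` and the three-term relation goes to `x_j x_k - x_j x_k + x_k² = x_k²`.
It sends `m` to the squarefree monomial `x_2 ⋯ x_n`, which does not lie in the monomial
ideal `(x_1², …, x_n²)`.
-/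

open MvPolynomial

/-- Index type for the generators `e_{ij}`, `1 ≤ i < j ≤ n`. -/
abbrev PairIdx (n : ℕ) := {p : Fin n × Fin n // p.1 < p.2}

/-- The relations of `H^*(C_n(ℝ³); ℤ)`: the squares `e_{ij}²` and the three-term
relations `e_{ij} e_{ik} - e_{ij} e_{jk} + e_{ik} e_{jk}` for `i < j < k`. -/
def configRels (n : ℕ) : Set (MvPolynomial (PairIdx n) ℤ) :=
  {f | (∃ p : PairIdx n, f = X p ^ 2) ∨
    ∃ (i j k : Fin n) (hij : i < j) (hjk : j < k),
      f = X ⟨(i, j), hij⟩ * X ⟨(i, k), hij.trans hjk⟩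
        - X ⟨(i, j), hij⟩ * X ⟨(j, k), hjk⟩
        + X ⟨(i, k), hij.trans hjk⟩ * X ⟨(j, k), hjk⟩}

/-- The algebra `A = ℤ[e_{ij}]/I`, i.e. `H^*(C_n(ℝ³); ℤ)` (generators in degree 2,
hence commutative). -/
abbrev ConfigAlg (n : ℕ) := MvPolynomial (PairIdx n) ℤ ⧸ Ideal.span (configRels n)

/-- The generator `e_{ij}` in `ConfigAlg n`. -/
noncomputable def eGen {n : ℕ} (p : PairIdx n) : ConfigAlg n :=
  Ideal.Quotient.mk _ (X p)

/-- `e_{1i}` (with the convention `e_{11} = 1` for the dummy index), for `0 < n`. -/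
noncomputable def eOne (n : ℕ) (hn : 0 < n) (i : Fin n) : ConfigAlg n :=
  if h : (⟨0, hn⟩ : Fin n) < i then eGen ⟨(⟨0, hn⟩, i), h⟩ else 1

/-- The monomial `m = e_{12} e_{13} ⋯ e_{1n}`. -/
noncomputable def mMonomial (n : ℕ) (hn : 0 < n) : ConfigAlg n :=
  ∏ i ∈ Finset.univ.erase (⟨0, hn⟩ : Fin n), eOne n hn i

namespace MvPolynomial

variable {σ R : Type*} [CommSemiring R]

theorem prod_X_eq_monomial (s : Finset σ) :
    ∏ i ∈ s, (X i : MvPolynomial σ R) = monomial (∑ i ∈ s, Finsupp.single i 1) 1 :=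
  (monomial_sum_one s _).symm

theorem prod_X_notMem_span_X_sq [Nontrivial R] (s : Finset σ) :
    ∏ i ∈ s, (X i : MvPolynomial σ R) ∉ Ideal.span (Set.range fun i => X i ^ 2) := by
  classical
  have hspan : (Set.range fun i => (X i : MvPolynomial σ R) ^ 2) =
      (fun d => monomial d 1) '' Set.range fun i => Finsupp.single i 2 := by
    rw [← Set.range_comp]
    congr 1
    funext i
    exact X_pow_eq_monomial
  rw [prod_X_eq_monomial, hspan, mem_ideal_span_monomial_image, support_monomial,
    if_neg one_ne_zero]
  intro h
  obtain ⟨_, ⟨i, rfl⟩, hle⟩ := h _ (Finset.mem_singleton_self _)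
  have h_two_le := hle i
  rw [Finsupp.single_eq_same, Finsupp.finsetSum_apply] at h_two_le
  have h_le_one : ∑ j ∈ s, (Finsupp.single j 1 : σ →₀ ℕ) i ≤ 1 := by
    simp only [Finsupp.single_apply, Finset.sum_ite_eq']
    split_ifs <;> simp
  omega

end MvPolynomial

namespace ConfigAlg

variable {n : ℕ} {R : Type*} [CommRing R]

noncomputable def lift (y : Fin n → R) (hy : ∀ j, y j ^ 2 = 0) : ConfigAlg n →+* R :=
  Ideal.Quotient.lift _ (eval₂Hom (Int.castRingHom R) fun p => y p.1.2) <| by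
    intro f hf
    refine RingHom.mem_ker.mp (Ideal.span_le.mpr ?_ hf)
    rintro _ (⟨p, rfl⟩ | ⟨i, j, k, hij, hjk, rfl⟩)
    · simp [hy]
    · simp [← hy k, sq]

theorem lift_eGen (y : Fin n → R) (hy : ∀ j, y j ^ 2 = 0) (p : PairIdx n) :
    lift y hy (eGen p) = y p.1.2 := by
  simp [lift, eGen]

theorem lift_mMonomial (y : Fin n → R) (hy : ∀ j, y j ^ 2 = 0) (hn : 0 < n) :
    lift y hy (mMonomial n hn) = ∏ i ∈ Finset.univ.erase ⟨0, hn⟩, y i := by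
  rw [mMonomial, map_prod]
  refine Finset.prod_congr rfl fun i hi => ?_
  have hlt : (⟨0, hn⟩ : Fin n) < i :=
    Fin.lt_def.mpr (Nat.pos_of_ne_zero fun h => Finset.ne_of_mem_erase hi (Fin.ext h))
  rw [eOne, dif_pos hlt, lift_eGen]

end ConfigAlg

/-- the monomial `m = e_{12} e_{13} ⋯ e_{1n}` is nonzero in
`A = ℤ[e_{ij}]/(e_{ij}², e_{ij}e_{ik} - e_{ij}e_{jk} + e_{ik}e_{jk})`. -/
theorem mMonomial_ne_zero (n : ℕ) (hn : 2 ≤ n) :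
    mMonomial n (by omega) ≠ 0 := by
  intro hm
  let I : Ideal (MvPolynomial (Fin n) ℤ) := Ideal.span (Set.range fun i => X i ^ 2)
  have hy : ∀ j, (Ideal.Quotient.mk I (X j)) ^ 2 = 0 := fun j => by
    rw [← map_pow, Ideal.Quotient.eq_zero_iff_mem]
    exact Ideal.subset_span ⟨j, rfl⟩
  have himage := ConfigAlg.lift_mMonomial _ hy (by omega)
  rw [hm, map_zero, ← map_prod, eq_comm, Ideal.Quotient.eq_zero_iff_mem] at himage
  exact MvPolynomial.prod_X_notMem_span_X_sq _ himage
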